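/- For metrics g = ds² + sinh²(s) h_s with h_s = h₀ + (2^n/n) e^{−ns} h + o(e^{−ns}) as s → ∞ (h₀ the round metric on 𝕊^{n−1}, h a symmetric 2-tensor), the mean curvature of the coordinate sphere S_s satisfies Θ_{S_s} = (n−1) coth(s) − 2^{n−1} e^{−ns} μ_{h₀} + o(e^{−ns}), where μ_{h₀} = tr_{h₀} h. In particular, for n ≥ 3, Θ_{S_s} = (n−1)(1 + 2e^{−2s}) + O(e^{−3s}) > n−1 for all large s, regardless of the sign of μ_{h₀}. -/

import Mathlib

/-!
Write `tr_{h_s}(∂_s h_s) = tr (h_s⁻¹ ∂_s h_s)`. Since `h_s → h₀` with `h₀` invertible,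
`h_s⁻¹ → h₀⁻¹`, and `∂_s h_s = -2ⁿ e^{-ns} H + o(e^{-ns})` gives
`tr (h_s⁻¹ ∂_s h_s) = -2ⁿ e^{-ns} tr (h₀⁻¹ H) + o(e^{-ns})`, the first expansion.
For `n ≥ 3` this trace is `O(e^{-3s})`, and `coth s = 1 + 2e^{-2s} + e^{-3s} / sinh s` exactly,
so `Θ = (n-1)(1 + 2e^{-2s}) + O(e^{-3s})`. The positive term `2(n-1)e^{-2s}` then dominates
the error, whatever the sign of `tr (h₀⁻¹ H)`.
-/

open Real Matrix Filter Asymptotics Topology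

noncomputable section

/-- The mean curvature of the coordinate sphere `S_s` in the metric
`g = ds² + sinh²(s) h_s`:  `Θ_{S_s} = (n-1) coth(s) + (1/2) tr_{h_s}(∂_s h_s)`. -/
def sphereMeanCurv (n : ℕ) (hs hs' : ℝ → Matrix (Fin (n - 1)) (Fin (n - 1)) ℝ)
    (s : ℝ) : ℝ :=
  ((n : ℝ) - 1) * Real.cosh s / Real.sinh s
    + (1 / 2) * Matrix.trace ((hs s)⁻¹ * hs' s)

theorem Real.cosh_div_sinh_eq_one_add_two_exp_add {s : ℝ} (hs : s ≠ 0) :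
    cosh s / sinh s = 1 + 2 * exp (-2 * s) + exp (-3 * s) / sinh s := by
  have hsinh : exp s - exp (-s) ≠ 0 := by
    simpa [sinh_eq] using sinh_ne_zero.mpr hs
  have hexp : exp s * exp (-s) = 1 := by rw [← exp_add, add_neg_cancel, exp_zero]
  rw [sinh_eq, cosh_eq, show -2 * s = -s + -s by ring, show -3 * s = -s + (-s + -s) by ring]
  simp only [exp_add]
  field_simp
  linear_combination (-2 * exp (-s)) * hexp

theorem Real.isBigO_cosh_div_sinh_sub_one_add_two_exp :
    (fun s => cosh s / sinh s - (1 + 2 * exp (-2 * s))) =O[atTop] fun s => exp (-3 * s) := by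
  refine IsBigO.of_bound 1 ?_
  filter_upwards [eventually_ge_atTop 1] with s hs
  have hsinh : 1 ≤ sinh s := hs.trans (self_le_sinh_iff.mpr (by linarith))
  rw [cosh_div_sinh_eq_one_add_two_exp_add (by linarith), add_sub_cancel_left, one_mul,
    norm_div, norm_of_nonneg (exp_pos _).le, norm_of_nonneg (by linarith)]
  exact div_le_self (exp_pos _).le hsinh

section MatrixAsymptotics

variable {α m n : Type*} {l : Filter α}

theorem Matrix.tendsto_of_forall_isBigO_sub {f : α → ℝ} {A : α → Matrix m n ℝ}
    {A₀ : Matrix m n ℝ} (hA : ∀ i j, (fun s => A s i j - A₀ i j) =O[l] f)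
    (hf : Tendsto f l (𝓝 0)) :
    Tendsto A l (𝓝 A₀) :=
  tendsto_pi_nhds.mpr fun i => tendsto_pi_nhds.mpr fun j =>
    tendsto_sub_nhds_zero_iff.mp ((hA i j).trans_tendsto hf)

theorem Matrix.isLittleO_trace_inv_mul_sub [Fintype n] [DecidableEq n] {f g : α → ℝ}
    {A B : α → Matrix n n ℝ} {A₀ M : Matrix n n ℝ} (hA : Tendsto A l (𝓝 A₀))
    (hA₀ : IsUnit A₀.det)
    (hB : ∀ i j, (fun s => B s i j - g s * M i j) =o[l] f) (hg : g =O[l] f) :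
    (fun s => trace ((A s)⁻¹ * B s) - g s * trace (A₀⁻¹ * M)) =o[l] f := by
  have hdet : ContinuousAt Ring.inverse A₀.det := by
    simpa only [Ring.inverse_eq_inv'] using continuousAt_inv₀ hA₀.ne_zero
  have hinv : Tendsto (fun s => (A s)⁻¹) l (𝓝 A₀⁻¹) :=
    (continuousAt_matrix_inv A₀ hdet).tendsto.comp hA
  have hinv_sub : ∀ i k, (fun s => (A s)⁻¹ i k - A₀⁻¹ i k) =o[l] (fun _ => (1 : ℝ)) :=
    fun i k => (isLittleO_one_iff ℝ).mpr <| tendsto_sub_nhds_zero_iff.mpr <|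
      tendsto_pi_nhds.mp (tendsto_pi_nhds.mp hinv i) k
  have hB_isBigO : ∀ k i, (fun s => B s k i) =O[l] f := fun k i =>
    ((hB k i).isBigO.add (hg.const_mul_left (M k i))).congr_left fun s => by ring
  have hentry : ∀ i k,
      (fun s => (A s)⁻¹ i k * B s k i - g s * (A₀⁻¹ i k * M k i)) =o[l] f := by
    intro i k
    have hvar : (fun s => ((A s)⁻¹ i k - A₀⁻¹ i k) * B s k i) =o[l] f := by
      simpa only [one_mul] using (hinv_sub i k).mul_isBigO (hB_isBigO k i)
    exact (hvar.add ((hB k i).const_mul_left (A₀⁻¹ i k))).congr_left fun s => by ring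
  have hsum : (fun s => ∑ i, ∑ k,
      ((A s)⁻¹ i k * B s k i - g s * (A₀⁻¹ i k * M k i))) =o[l] f :=
    IsLittleO.fun_sum fun i _ => IsLittleO.fun_sum fun k _ => hentry i k
  refine hsum.congr_left fun s => ?_
  simp only [trace, diag, mul_apply, Finset.mul_sum, Finset.sum_sub_distrib]

end MatrixAsymptotics

theorem eventually_lt_of_isBigO_sub_mul_one_add_two_exp {F : ℝ → ℝ} {c : ℝ} (hc : 0 < c)
    (hF : (fun s => F s - c * (1 + 2 * exp (-2 * s))) =O[atTop] fun s => exp (-3 * s)) :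
    ∀ᶠ s in atTop, c < F s := by
  have hexp_three : (fun s : ℝ => exp (-3 * s)) =o[atTop] fun s => 2 * c * exp (-2 * s) :=
    (isLittleO_exp_comp_exp_comp.mpr (tendsto_id.congr fun s => by simp only [id]; ring))
      |>.trans_isBigO (isBigO_self_const_mul (by positivity) _ _)
  have hequiv : (fun s => F s - c) ~[atTop] fun s => 2 * c * exp (-2 * s) :=
    (hF.trans_isLittleO hexp_three).congr_left fun s => by simp only [Pi.sub_apply]; ring
  filter_upwards [hequiv.eventually_pos (.of_forall fun s => by positivity)] with s hs
  linarith

theorem sphereMeanCurv_asymptotics_general (n : ℕ) (hn : 3 ≤ n)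
    (h₀ H : Matrix (Fin (n - 1)) (Fin (n - 1)) ℝ) (hh₀ : IsUnit h₀.det)
    (hs hs' : ℝ → Matrix (Fin (n - 1)) (Fin (n - 1)) ℝ)
    (hexp : ∀ i j : Fin (n - 1),
      (fun s => hs s i j - (h₀ i j + (2 ^ n / (n : ℝ)) * Real.exp (-(n : ℝ) * s) * H i j))
        =o[atTop] fun s => Real.exp (-(n : ℝ) * s))
    (hexp' : ∀ i j : Fin (n - 1),
      (fun s => hs' s i j + 2 ^ n * Real.exp (-(n : ℝ) * s) * H i j)
        =o[atTop] fun s => Real.exp (-(n : ℝ) * s)) :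
    ((fun s => sphereMeanCurv n hs hs' s
        - (((n : ℝ) - 1) * Real.cosh s / Real.sinh s
            - 2 ^ (n - 1) * Real.exp (-(n : ℝ) * s) * Matrix.trace (h₀⁻¹ * H)))
      =o[atTop] fun s => Real.exp (-(n : ℝ) * s))
    ∧ ((fun s => sphereMeanCurv n hs hs' s
          - ((n : ℝ) - 1) * (1 + 2 * Real.exp (-2 * s)))
        =O[atTop] fun s => Real.exp (-3 * s))
    ∧ (∀ᶠ s in atTop, (n : ℝ) - 1 < sphereMeanCurv n hs hs' s) := by
  set E : ℝ → ℝ := fun s => exp (-(n : ℝ) * s)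
  have hn3 : (3 : ℝ) ≤ n := by exact_mod_cast hn
  have hE : Tendsto E atTop (𝓝 0) :=
    tendsto_exp_atBot.comp (tendsto_id.const_mul_atTop_of_neg (by linarith))
  have hlim : Tendsto hs atTop (𝓝 h₀) :=
    Matrix.tendsto_of_forall_isBigO_sub (fun i j => ((hexp i j).isBigO.add
      ((isBigO_refl E atTop).const_mul_left (2 ^ n / n * H i j))).congr_left fun s => by ring) hE
  have htrace : (fun s => trace ((hs s)⁻¹ * hs' s) + 2 ^ n * E s * trace (h₀⁻¹ * H))
      =o[atTop] E :=
    (Matrix.isLittleO_trace_inv_mul_sub (g := fun s => -(2 ^ n * E s)) hlim hh₀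
      (fun i j => (hexp' i j).congr_left fun s => by ring)
      ((isBigO_refl E atTop).const_mul_left _).neg_left).congr_left fun s => by ring
  have htrace_isBigO : (fun s => 1 / 2 * trace ((hs s)⁻¹ * hs' s))
      =O[atTop] fun s => exp (-3 * s) :=
    (((htrace.isBigO.sub ((isBigO_refl E atTop).const_mul_left (2 ^ n * trace (h₀⁻¹ * H))))
      |>.congr_left fun s => by ring).const_mul_left _).trans
      (HurwitzKernelBounds.isBigO_exp_neg_mul_of_le hn3)
  have hexpansion : (fun s => sphereMeanCurv n hs hs' s
      - ((n : ℝ) - 1) * (1 + 2 * exp (-2 * s))) =O[atTop] fun s => exp (-3 * s) :=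
    ((isBigO_cosh_div_sinh_sub_one_add_two_exp.const_mul_left ((n : ℝ) - 1)).add
      htrace_isBigO).congr_left fun s => by simp only [sphereMeanCurv]; ring
  have hpow : (2 : ℝ) ^ n = 2 * 2 ^ (n - 1) := by rw [← pow_succ']; congr 1; omega
  refine ⟨(htrace.const_mul_left (1 / 2)).congr_left fun s => ?_, hexpansion,
    eventually_lt_of_isBigO_sub_mul_one_add_two_exp (by linarith) hexpansion⟩
  simp only [sphereMeanCurv, E, hpow]
  ring

/-- For metrics `g = ds² + sinh²(s) h_s` with
`h_s = h₀ + (2ⁿ/n) e^{-ns} h + o(e^{-ns})` (and correspondingly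
`∂_s h_s = -2ⁿ e^{-ns} h + o(e^{-ns})`), the mean curvature of the coordinate
sphere `S_s` satisfies `Θ_{S_s} = (n-1)coth(s) - 2^{n-1} e^{-ns} μ_{h₀} + o(e^{-ns})`
with `μ_{h₀} = tr_{h₀} h`; in particular for `n ≥ 3`,
`Θ_{S_s} = (n-1)(1 + 2e^{-2s}) + O(e^{-3s})`, which is `> n-1` for all large `s`,
regardless of the sign of `μ_{h₀}`. -/
theorem sphereMeanCurv_asymptotics (n : ℕ) (hn : 3 ≤ n)
    (h₀ H : Matrix (Fin (n - 1)) (Fin (n - 1)) ℝ) (hh₀ : IsUnit h₀.det)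
    (hs hs' : ℝ → Matrix (Fin (n - 1)) (Fin (n - 1)) ℝ)
    (hderiv : ∀ (s : ℝ) (i j : Fin (n - 1)),
      HasDerivAt (fun t => hs t i j) (hs' s i j) s)
    (hunit : ∀ᶠ s in atTop, IsUnit (hs s).det)
    (hexp : ∀ i j : Fin (n - 1),
      (fun s => hs s i j - (h₀ i j + (2 ^ n / (n : ℝ)) * Real.exp (-(n : ℝ) * s) * H i j))
        =o[atTop] fun s => Real.exp (-(n : ℝ) * s))
    (hexp' : ∀ i j : Fin (n - 1),
      (fun s => hs' s i j + 2 ^ n * Real.exp (-(n : ℝ) * s) * H i j)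
        =o[atTop] fun s => Real.exp (-(n : ℝ) * s)) :
    ((fun s => sphereMeanCurv n hs hs' s
        - (((n : ℝ) - 1) * Real.cosh s / Real.sinh s
            - 2 ^ (n - 1) * Real.exp (-(n : ℝ) * s) * Matrix.trace (h₀⁻¹ * H)))
      =o[atTop] fun s => Real.exp (-(n : ℝ) * s))
    ∧ ((fun s => sphereMeanCurv n hs hs' s
          - ((n : ℝ) - 1) * (1 + 2 * Real.exp (-2 * s)))
        =O[atTop] fun s => Real.exp (-3 * s))
    ∧ (∀ᶠ s in atTop, (n : ℝ) - 1 < sphereMeanCurv n hs hs' s) :=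
  sphereMeanCurv_asymptotics_general n hn h₀ H hh₀ hs hs' hexp hexp'

end
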